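/- Let λ be a regular cardinal and μ a cardinal with the property that a family P ⊆ [μ]^θ (for some regular θ < λ) of size μ satisfies: for every A ∈ [μ]^θ there is C ∈ P with |A ∩ C| = θ. If there is a <_cl-dominating family of increasing functions in λ^λ of size μ indexed by μ, then d(λ) ≤ μ, i.e., there is a <*-dominating family of size μ (namely the pointwise suprema h_A(γ) = sup_{α∈A} h_α(γ) for A ∈ P). -/

import Mathlib

open Cardinal

/-- Eventual domination: `f <* g` iff `f β < g β` for all sufficiently large `β`. -/
def almostLt {T : Type*} [LinearOrder T] (f g : T → T) : Prop :=
  ∃ γ : T, ∀ β : T, γ < β → f β < g β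

/-- `C` is a club: unbounded, and closed under limits (every limit point belongs to `C`). -/
def IsClubIn {T : Type*} [LinearOrder T] (C : Set T) : Prop :=
  (∀ x : T, ∃ y ∈ C, x < y) ∧
  ∀ x : T, (∃ y : T, y < x) → (∀ y : T, y < x → ∃ z ∈ C, y < z ∧ z < x) → x ∈ C

/-- Club domination: `f <_cl g` iff `f < g` pointwise on some club. -/
def clubLt {T : Type*} [LinearOrder T] (f g : T → T) : Prop :=
  ∃ C : Set T, IsClubIn C ∧ ∀ α ∈ C, f α < g α

/-- The bounding number of `(T → T, r)`: the least size of a family with no single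
`r`-upper bound. -/
noncomputable def bFun (T : Type*) [LinearOrder T] (r : (T → T) → (T → T) → Prop) : Cardinal :=
  sInf {c : Cardinal | ∃ U : Set (T → T), (∀ g : T → T, ∃ f ∈ U, ¬ r f g) ∧ #U = c}

/-- The dominating number of `(T → T, r)`: the least size of an `r`-dominating family. -/
noncomputable def dFun (T : Type*) [LinearOrder T] (r : (T → T) → (T → T) → Prop) : Cardinal :=
  sInf {c : Cardinal | ∃ D : Set (T → T), (∀ f : T → T, ∃ g ∈ D, r f g) ∧ #D = c}

/-!
Fix `f`. By transfinite recursion along `θ` build functions `g ξ`, each `<_cl`-below some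
`h (a ξ)` on a club `E ξ`, such that `g ξ` bounds every earlier `h (a η)` (so `a` is injective)
and bounds `f` on each block from a point `γ` up to the next point of `⋂_{η<ξ} E η` above `γ`.
As `range a` has size `θ`, some `C ∈ P` contains `a ξ` for cofinally many `ξ`. For large `β`,
let `δ` be the last point of `⋂_ξ E ξ` below `β`: the decreasing closed sets `⋂_{η<ξ} E η` cannot
all meet `(δ, β]`, so past some `ξ₀` the block starting at `δ` contains `β`, and for `ξ ≥ ξ₀` with
`a ξ ∈ C` we get `f β ≤ g ξ δ < h (a ξ) δ ≤ h (a ξ) β ≤ sup_{i ∈ C} h i β`.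
-/

open Order Set
open scoped Ordinal

attribute [local instance]
  WellFoundedLT.toOrderBot WellFoundedLT.conditionallyCompleteLinearOrderBot

universe u

theorem IsClubIn.isClub {α : Type*} [LinearOrder α] {C : Set α} (hC : IsClubIn C) :
    IsClub C := by
  refine ⟨fun d hdC ⟨x, hx⟩ _ a ha => ?_, fun x => (hC.1 x).imp fun _ ⟨hy, hxy⟩ => ⟨hy, hxy.le⟩⟩
  by_cases had : a ∈ d
  · exact hdC had
  have hlt : ∀ y ∈ d, y < a := fun y hy => (ha.1 hy).lt_of_ne fun h => had (h ▸ hy)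
  refine hC.2 a ⟨x, hlt x hx⟩ fun y hy => ?_
  obtain ⟨z, hz, hyz⟩ : ∃ z ∈ d, y < z := by
    by_contra! h
    exact (ha.2 h).not_gt hy
  exact ⟨z, hdC hz, hyz, hlt z hz⟩

theorem bddAbove_of_mk_lt_cof {α : Type*} [LinearOrder α] {s : Set α} (hs : #s < cof α) :
    BddAbove s :=
  .of_not_isCofinal fun h => (cof_le h).not_gt hs

theorem isCofinal_of_mk_le {ι : Type*} [LinearOrder ι] [WellFoundedLT ι]
    (hι : (#ι).ord = typeLT ι) {S : Set ι} (hS : #ι ≤ #S) : IsCofinal S := by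
  by_contra h
  obtain ⟨x, hx⟩ := not_isCofinal_iff.1 h
  exact (hS.trans (mk_le_mk_of_subset hx)).not_gt (mk_Iio_lt x hι)

theorem exists_mem_iInter_inter_Ioc {α ι : Type*} [LinearOrder α] [WellFoundedLT α]
    [SemilatticeSup ι] [Nonempty ι] {D : ι → Set α} (hD : Antitone D)
    (hcl : ∀ i, DirSupClosed (D i)) {a b : α} (h : ∀ i, (D i ∩ Ioc a b).Nonempty) :
    ((⋂ i, D i) ∩ Ioc a b).Nonempty := by
  have : Nonempty α := ⟨a⟩
  set z : ι → α := fun i => sInf (D i ∩ Ioc a b)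
  have hz : ∀ i, z i ∈ D i ∩ Ioc a b := fun i => csInf_mem (h i)
  have hzmono : Monotone z := fun i j hij =>
    csInf_le_csInf ⟨a, fun _ hx => hx.2.1.le⟩ (h j) (inter_subset_inter_left _ (hD hij))
  have hbdd : BddAbove (range z) := ⟨b, by rintro _ ⟨i, rfl⟩; exact (hz i).2.2⟩
  refine ⟨⨆ i, z i, mem_iInter.2 fun i => ?_, ?_, ciSup_le fun i => (hz i).2.2⟩
  · refine hcl i (d := z '' Ici i) ?_ (nonempty_Ici.image z) (.of_linearOrder _)
      ⟨?_, fun c hc => ciSup_le fun j => ?_⟩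
    · rintro _ ⟨j, hij, rfl⟩
      exact hD hij (hz j).1
    · rintro _ ⟨j, -, rfl⟩
      exact le_ciSup hbdd j
    · exact (hzmono le_sup_left).trans (hc ⟨j ⊔ i, le_sup_right, rfl⟩)
  · obtain ⟨i⟩ := ‹Nonempty ι›
    exact (hz i).2.1.trans_le (le_ciSup hbdd i)

namespace ClubDomination

variable {α ι : Type u} [LinearOrder α] [WellFoundedLT α] [Nonempty α]
  [LinearOrder ι] [WellFoundedLT ι]
  (f : α → α) (dom : (α → α) → α → α) (club : (α → α) → Set α)

/-- The functions `g ξ` of the sketch above, for a choice of `<_cl`-dominators `dom g` of `g`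
with witnessing clubs `club g`; `sInf (clubBelow ξ ∩ Ioi γ)` is the next point above `γ` of the
earlier clubs. -/
noncomputable def chain : ι → α → α :=
  WellFounded.fix wellFounded_lt fun ξ g γ =>
    sSup (f '' Iio (sInf ((⋂ η : Iio ξ, club (g η η.2)) ∩ Ioi γ)) ∪
      range fun η : Iio ξ => dom (g η η.2) γ)

def clubBelow (ξ : ι) : Set α := ⋂ η : Iio ξ, club (chain f dom club η.1)

theorem chain_apply (ξ : ι) (γ : α) :
    chain f dom club ξ γ = sSup (f '' Iio (sInf (clubBelow f dom club ξ ∩ Ioi γ)) ∪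
      range fun η : Iio ξ => dom (chain f dom club η.1) γ) := by
  rw [chain, WellFounded.fix_eq]
  rfl

theorem antitone_clubBelow : Antitone (clubBelow (ι := ι) f dom club) :=
  fun _ _ hξ => iInter_mono' fun η => ⟨⟨η, η.2.trans_le hξ⟩, Subset.rfl⟩

variable [IsRegularCardinalOrder α]

theorem bddAbove_image_Iio_union_range (hι : #ι < #α) (ξ : ι) (γ x : α) :
    BddAbove (f '' Iio x ∪ range fun η : Iio ξ => dom (chain f dom club η.1) γ) := by
  refine (bddAbove_of_mk_lt_cof ?_).union (bddAbove_of_mk_lt_cof ?_) <;> rw [cof_eq_cardinalMk]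
  · exact mk_image_le.trans_lt (mk_Iio_lt x ord_cardinalMk)
  · exact mk_range_le.trans_lt ((mk_le_mk_of_subset (subset_univ _)).trans_lt (by simpa))

theorem apply_le_chain (hι : #ι < #α) {ξ : ι} {β γ : α}
    (hβ : β < sInf (clubBelow f dom club ξ ∩ Ioi γ)) : f β ≤ chain f dom club ξ γ := by
  rw [chain_apply]
  exact le_csSup (bddAbove_image_Iio_union_range f dom club hι ξ γ _) (.inl ⟨β, hβ, rfl⟩)

theorem dom_chain_le_chain (hι : #ι < #α) {η ξ : ι} (hηξ : η < ξ) (γ : α) :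
    dom (chain f dom club η) γ ≤ chain f dom club ξ γ := by
  rw [chain_apply]
  exact le_csSup (bddAbove_image_Iio_union_range f dom club hι ξ γ _) (.inr ⟨⟨η, hηξ⟩, rfl⟩)

theorem isClub_clubBelow (hα : ℵ₀ < #α) (hι : #ι < #α) (hclub : ∀ g, IsClub (club g))
    (ξ : ι) : IsClub (clubBelow f dom club ξ) := by
  refine IsClub.iInter (by simpa using hα.ne') ?_ fun _ => hclub _
  simpa using (mk_le_mk_of_subset (subset_univ (Iio ξ))).trans_lt (by simpa using hι)

theorem injective_dom_chain (hι : #ι < #α) (hclub : ∀ g, IsClub (club g))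
    (hlt : ∀ g, ∀ x ∈ club g, g x < dom g x) :
    Function.Injective fun ξ : ι => dom (chain f dom club ξ) := by
  refine .of_lt_imp_ne fun η ξ hηξ heq => ?_
  obtain ⟨γ, hγ⟩ := (hclub (chain f dom club ξ)).nonempty
  have := (dom_chain_le_chain f dom club hι hηξ γ).trans_lt (hlt _ γ hγ)
  exact this.ne (congrFun heq γ)

theorem exists_eventually_lt_dom_chain [NoMaxOrder α] [Nonempty ι] [NoMaxOrder ι] (hα : ℵ₀ < #α)
    (hι : #ι < #α) (hclub : ∀ g, IsClub (club g)) (hlt : ∀ g, ∀ x ∈ club g, g x < dom g x)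
    (hmono : ∀ g, Monotone (dom g)) {S : Set ι} (hS : IsCofinal S) :
    ∃ γ, ∀ β, γ < β → ∃ ξ ∈ S, f β < dom (chain f dom club ξ) β := by
  have hbelow := isClub_clubBelow (ι := ι) f dom club hα hι hclub
  set D := ⋂ ξ : ι, clubBelow f dom club ξ
  have hD : IsClub D := IsClub.iInter (by simpa using hα.ne') (by simpa using hι) hbelow
  obtain ⟨γ, hγ⟩ := hD.nonempty
  refine ⟨γ, fun β hγβ => ?_⟩
  have hne : (D ∩ Iic β).Nonempty := ⟨γ, hγ, hγβ.le⟩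
  have hbdd : BddAbove (D ∩ Iic β) := ⟨β, fun _ hx => hx.2⟩
  set δ := sSup (D ∩ Iic β)
  have hδD : δ ∈ D := hD.csSup_mem inter_subset_left hne hbdd
  have hδβ : δ ≤ β := csSup_le hne fun _ hx => hx.2
  obtain ⟨ξ₀, hξ₀⟩ : ∃ ξ₀, clubBelow f dom club ξ₀ ∩ Ioc δ β = ∅ := by
    by_contra! h
    obtain ⟨z, hzD, hδz, hzβ⟩ := exists_mem_iInter_inter_Ioc (antitone_clubBelow f dom club)
      (fun ξ => (hbelow ξ).dirSupClosed) h
    exact (le_csSup hbdd ⟨hzD, hzβ⟩).not_gt hδz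
  obtain ⟨ξ, hξS, hξ₀ξ⟩ := hS ξ₀
  refine ⟨ξ, hξS, ?_⟩
  have hnext : β < sInf (clubBelow f dom club ξ ∩ Ioi δ) := by
    obtain ⟨δ', hδδ'⟩ := exists_gt δ
    obtain ⟨x, hx, hδ'x⟩ := (hbelow ξ).isCofinal δ'
    have hmem := csInf_mem (s := clubBelow f dom club ξ ∩ Ioi δ) ⟨x, hx, hδδ'.trans_le hδ'x⟩
    by_contra! hle
    exact hξ₀.subset ⟨antitone_clubBelow f dom club hξ₀ξ hmem.1, hmem.2, hle⟩
  obtain ⟨ξ', hξξ'⟩ := exists_gt ξ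
  have hδ : δ ∈ club (chain f dom club ξ) := mem_iInter.1 (mem_iInter.1 hδD ξ') ⟨ξ, hξξ'⟩
  calc f β ≤ chain f dom club ξ δ := apply_le_chain f dom club hι hnext
    _ < dom (chain f dom club ξ) δ := hlt _ δ hδ
    _ ≤ dom (chain f dom club ξ) β := hmono _ hδβ

end ClubDomination

open ClubDomination in
theorem exists_injective_eventually_dominated {α ι : Type u} [LinearOrder α] [WellFoundedLT α]
    [IsRegularCardinalOrder α] [NoMaxOrder α] [LinearOrder ι] [WellFoundedLT ι] [Nonempty ι]
    [NoMaxOrder ι] (hα : ℵ₀ < #α) (hι : #ι < #α) {I : Type*} (h : I → α → α)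
    (hmono : ∀ i, Monotone (h i)) (hdom : ∀ g : α → α, ∃ i, clubLt g (h i)) (f : α → α) :
    ∃ a : ι → I, Function.Injective a ∧
      ∀ S : Set ι, IsCofinal S → ∃ γ, ∀ β, γ < β → ∃ ξ ∈ S, f β < h (a ξ) β := by
  choose idx club hclub hlt using hdom
  have : Nonempty α := mk_ne_zero_iff.1 (aleph0_pos.trans hα).ne'
  refine ⟨fun ξ => idx (chain f (h ∘ idx) club ξ), ?_, fun S hS => ?_⟩
  · exact (injective_dom_chain f (h ∘ idx) club hι (fun g => (hclub g).isClub) hlt).of_comp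
  · exact exists_eventually_lt_dom_chain f (h ∘ idx) club hα hι (fun g => (hclub g).isClub) hlt
      (fun g => hmono (idx g)) hS

/-- If `P ⊆ [μ]^θ` has size `μ` and meets every set in `[μ]^θ` in a set of size `θ`, and
there is a `<_cl`-dominating family of increasing functions indexed by `μ`, then there is a
`<*`-dominating family of size at most `μ`; that is, `d(λ) ≤ μ`. -/
theorem dFun_le_of_club_dominating (κ : Cardinal) (hκ : κ.IsRegular) (huncount : ℵ₀ < κ)
    (θ : Cardinal) (hθ : θ.IsRegular) (hθκ : θ < κ) (μ : Cardinal)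
    (P : Set (Set μ.ord.ToType)) (hPθ : ∀ A ∈ P, #A = θ) (hPcard : #P = μ)
    (hPcover : ∀ A : Set μ.ord.ToType, #A = θ → ∃ C ∈ P, #(↥(A ∩ C)) = θ)
    (h : μ.ord.ToType → (κ.ord.ToType → κ.ord.ToType))
    (hmono : ∀ i, Monotone (h i))
    (hdom : ∀ f : κ.ord.ToType → κ.ord.ToType, ∃ i, clubLt f (h i)) :
    ∃ D : Set (κ.ord.ToType → κ.ord.ToType),
      (∀ f : κ.ord.ToType → κ.ord.ToType, ∃ g ∈ D, almostLt f g) ∧ #D ≤ μ := by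
  have : IsRegularCardinalOrder κ.ord.ToType :=
    ⟨by rw [Ordinal.type_toType, Ordinal.cof_toType, hκ.cof_ord]⟩
  have := noMaxOrder hκ.aleph0_le
  have := noMaxOrder hθ.aleph0_le
  have : Nonempty κ.ord.ToType := mk_ne_zero_iff.1 (by simpa using hκ.pos.ne')
  have : Nonempty θ.ord.ToType := mk_ne_zero_iff.1 (by simpa using hθ.pos.ne')
  refine ⟨(fun C β => sSup ((h · β) '' C)) '' P, fun f => ?_, mk_image_le.trans hPcard.le⟩
  obtain ⟨a, ha_inj, ha⟩ := exists_injective_eventually_dominated (ι := θ.ord.ToType)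
    (by simpa) (by simpa) h hmono hdom f
  obtain ⟨C, hCP, hC⟩ := hPcover (range a) (by rw [mk_range_eq _ ha_inj, mk_ord_toType])
  have hS : IsCofinal (a ⁻¹' C) := by
    refine isCofinal_of_mk_le (by simp) ?_
    rw [mk_ord_toType]
    exact hC.symm.trans_le (image_preimage_eq_range_inter ▸ mk_image_le)
  obtain ⟨γ, hγ⟩ := ha _ hS
  refine ⟨_, mem_image_of_mem _ hCP, γ, fun β hβ => ?_⟩
  obtain ⟨ξ, hξC, hlt⟩ := hγ β hβ
  refine hlt.trans_le (le_csSup (bddAbove_of_mk_lt_cof ?_) (mem_image_of_mem _ hξC))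
  rw [Ordinal.cof_toType, hκ.cof_ord]
  exact mk_image_le.trans_lt ((hPθ C hCP).trans_lt hθκ)
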